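/- If G has independence number at most 2, then every linear coloring of G is also a centered coloring. -/

import Mathlib

/-- A linear coloring: every path in `G` contains a vertex whose color appears
exactly once on the path. -/
def IsLinearColoring {V C : Type*} [DecidableEq C] (G : SimpleGraph V) (ψ : V → C) : Prop :=
  ∀ ⦃u v : V⦄ (p : G.Walk u v), p.IsPath →
    ∃ w ∈ p.support, (p.support.map ψ).count (ψ w) = 1

/-- A centered coloring: every nonempty vertex set inducing a connected subgraph
contains a vertex whose color appears exactly once in the set. -/
def IsCenteredColoring {V C : Type*} [DecidableEq C] (G : SimpleGraph V) (φ : V → C) : Prop :=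
  ∀ S : Finset V, S.Nonempty → (G.induce (S : Set V)).Connected →
    ∃ w ∈ S, (S.filter (fun x => φ x = φ w)).card = 1

/-- The linear coloring number: minimum number of colors of a linear coloring. -/
noncomputable def chiLin {V : Type*} (G : SimpleGraph V) : ℕ :=
  sInf {k | ∃ ψ : V → Fin k, IsLinearColoring G ψ}

/-- The centered coloring number: minimum number of colors of a centered coloring. -/
noncomputable def chiCen {V : Type*} (G : SimpleGraph V) : ℕ :=
  sInf {k | ∃ φ : V → Fin k, IsCenteredColoring G φ}

/-- A treedepth decomposition of `G`: a rooted forest on the vertices of `G`,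
given by its ancestor relation `anc` (a partial order whose down-sets are chains),
such that every edge of `G` joins an ancestor-descendant pair. -/
structure TreedepthDecomp {V : Type*} (G : SimpleGraph V) where
  anc : V → V → Prop
  refl : ∀ v, anc v v
  antisymm : ∀ u v, anc u v → anc v u → u = v
  trans : ∀ u v w, anc u v → anc v w → anc u w
  chain : ∀ u v w, anc u w → anc v w → anc u v ∨ anc v u
  edge : ∀ u v, G.Adj u v → anc u v ∨ anc v u

/-- The decomposition has depth at most `k`: every ancestor-descendant chain has
at most `k` vertices. -/
def TreedepthDecomp.depthLE {V : Type*} {G : SimpleGraph V} (d : TreedepthDecomp G)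
    (k : ℕ) : Prop :=
  ∀ s : Finset V, (∀ a ∈ s, ∀ b ∈ s, d.anc a b ∨ d.anc b a) → s.card ≤ k

/-- The treedepth of `G`: minimum depth of a treedepth decomposition. -/
noncomputable def treedepth {V : Type*} (G : SimpleGraph V) : ℕ :=
  sInf {k | ∃ d : TreedepthDecomp G, d.depthLE k}


/-! A connected graph with no three pairwise non-adjacent vertices has a Hamiltonian path. Take
a longest path `u ⋯ v`; by maximality all neighbours of `u` and `v` lie on it. If some vertex is
missed, connectivity gives an edge `y z` with `y` off the path and `z` an inner vertex. As
`y, u, v` are not independent, `u ~ v`, and the cycle `u ⋯ v u` opened at `z` and prolonged by `y`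
is a longer path. Applied to a connected induced subgraph `G[S]`, the linear coloring gives on
this Hamiltonian path of `G[S]` a colour occurring exactly once on it, hence exactly once in `S`.
-/

namespace SimpleGraph

variable {V : Type*} {G : SimpleGraph V}

theorem IndepSetFree.induce {n : ℕ} (h : G.IndepSetFree n) (s : Set V) :
    (G.induce s).IndepSetFree n := by
  intro t ht
  refine h (t.map (Function.Embedding.subtype _)) ⟨?_, by simp [ht.card_eq]⟩
  intro _ ha _ hb hab
  rw [Finset.coe_map] at ha hb
  obtain ⟨a, ha, rfl⟩ := ha
  obtain ⟨b, hb, rfl⟩ := hb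
  exact ht.isIndepSet ha hb (ne_of_apply_ne _ hab)

theorem IndepSetFree.adj_of_not_adj_of_not_adj {a b c : V} (h : G.IndepSetFree 3)
    (hab : a ≠ b) (hac : a ≠ c) (hbc : b ≠ c) (nab : ¬G.Adj a b) (nac : ¬G.Adj a c) :
    G.Adj b c := by
  classical
  by_contra nbc
  refine h {a, b, c} ⟨?_, Finset.card_eq_three.mpr ⟨a, b, c, hab, hac, hbc, rfl⟩⟩
  simp only [Finset.coe_insert, Finset.coe_singleton, IsIndepSet, Set.pairwise_insert,
    Set.pairwise_singleton, Set.mem_insert_iff, Set.mem_singleton_iff]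
  grind [G.adj_comm]

namespace Walk

variable {u v : V}

theorem two_le_length_of_mem_support {p : G.Walk u v} {z : V} (hz : z ∈ p.support)
    (hzu : z ≠ u) (hzv : z ≠ v) : 2 ≤ p.length := by
  cases p with
  | nil => simp_all
  | cons _ q =>
    cases q with
    | nil => simp_all
    | cons => simp

theorem IsCycle.exists_isPath_of_mem_support [DecidableEq V] {c : G.Walk u u}
    (hc : c.IsCycle) {z : V} (hz : z ∈ c.support) :
    ∃ (w : V) (q : G.Walk z w), q.IsPath ∧ q.length + 1 = c.length ∧
      ∀ x ∈ q.support, x ∈ c.support.tail := by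
  have hc' := hc.rotate hz
  refine ⟨_, (c.rotate z hz).tail.reverse, hc'.isPath_tail.reverse, ?_, fun x hx => ?_⟩
  · have := hc.isCircuit.three_le_length
    simp only [length_reverse, length_tail, length_rotate]
    omega
  · rw [support_reverse, List.mem_reverse, support_tail_of_not_nil _ hc'.not_nil] at hx
    exact (c.support_rotate z hz).mem_iff.mp hx

theorem IsPath.isHamiltonian_of_forall_length_le [DecidableEq V] (hG : G.Connected)
    (hfree : G.IndepSetFree 3) {p : G.Walk u v} (hp : p.IsPath)
    (hmax : ∀ (a b : V) (q : G.Walk a b), q.IsPath → q.length ≤ p.length) :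
    p.IsHamiltonian := by
  refine hp.isHamiltonian_of_mem fun x => by_contra fun hx => ?_
  have hu : ∀ y, G.Adj y u → y ∈ p.support := fun y hy => by_contra fun hyp => by
    simpa using hmax _ _ _ (hp.cons hyp (h := hy))
  have hv : ∀ y, G.Adj y v → y ∈ p.support := fun y hy => by_contra fun hyp => by
    simpa using hmax _ _ _ (hp.reverse.cons (by simpa using hyp) (h := hy))
  obtain ⟨⟨⟨z, y⟩, hzy⟩, -, hz, hy⟩ :=
    (hG.preconnected u x).some.exists_boundary_dart {w | w ∈ p.support} p.start_mem_support hx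
  simp only [Set.mem_ofPred_eq] at hz hy
  have hzu : z ≠ u := fun h => hy (hu y (h ▸ hzy.symm))
  have hzv : z ≠ v := fun h => hy (hv y (h ▸ hzy.symm))
  have hlen := two_le_length_of_mem_support hz hzu hzv
  have huv : u ≠ v := by
    rintro rfl
    simp [length_eq_zero_iff.mpr (isPath_iff_nil.mp hp)] at hlen
  have hadj : G.Adj u v := hfree.adj_of_not_adj_of_not_adj
    (ne_of_mem_of_not_mem p.start_mem_support hy).symm
    (ne_of_mem_of_not_mem p.end_mem_support hy).symm huv
    (fun h => hy (hu y h)) (fun h => hy (hv y h))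
  have hc : (cons hadj p.reverse).IsCycle :=
    isCycle_iff_isPath_tail_and_le_length.mpr
      ⟨by simpa using hp.reverse, by simp only [length_cons, length_reverse]; omega⟩
  obtain ⟨w, q, hq, hqlen, hqsupp⟩ := hc.exists_isPath_of_mem_support (z := z) (by simp [hz])
  have := hmax _ _ _ (hq.cons (fun h => hy (by simpa using hqsupp y h)) (h := hzy.symm))
  simp only [length_cons, length_reverse] at this hqlen
  omega

end Walk

theorem exists_isPath_forall_length_le [Fintype V] [Nonempty V] (G : SimpleGraph V) :
    ∃ (u v : V) (p : G.Walk u v), p.IsPath ∧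
      ∀ (a b : V) (q : G.Walk a b), q.IsPath → q.length ≤ p.length := by
  set T : Set ℕ := {n | ∃ (u v : V) (p : G.Walk u v), p.IsPath ∧ p.length = n}
  have hbdd : BddAbove T :=
    ⟨Fintype.card V, by rintro _ ⟨u, v, p, hp, rfl⟩; exact hp.length_lt.le⟩
  obtain ⟨u, v, p, hp, hlen⟩ : sSup T ∈ T :=
    Nat.sSup_mem ⟨0, Classical.arbitrary V, _, .nil, .nil, rfl⟩ hbdd
  exact ⟨u, v, p, hp, fun a b q hq => hlen ▸ le_csSup hbdd ⟨a, b, q, hq, rfl⟩⟩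

theorem Connected.exists_isHamiltonian_of_indepSetFree_three [Fintype V] [DecidableEq V]
    (hG : G.Connected) (hfree : G.IndepSetFree 3) :
    ∃ (u v : V) (p : G.Walk u v), p.IsHamiltonian :=
  have := hG.nonempty
  let ⟨u, v, p, hp, hmax⟩ := G.exists_isPath_forall_length_le
  ⟨u, v, p, hp.isHamiltonian_of_forall_length_le hG hfree hmax⟩

end SimpleGraph

theorem IsLinearColoring.exists_card_filter_eq_one {V C : Type*} [DecidableEq V]
    [DecidableEq C] {G : SimpleGraph V} {ψ : V → C} (h : IsLinearColoring G ψ) {u v : V}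
    {p : G.Walk u v} (hp : p.IsPath) :
    ∃ w ∈ p.support, (p.support.toFinset.filter (ψ · = ψ w)).card = 1 := by
  obtain ⟨w, hw, hcount⟩ := h p hp
  refine ⟨w, hw, ?_⟩
  rw [hp.support_nodup.card_eq_countP, ← hcount, List.count, List.countP_map]
  rfl

open SimpleGraph

theorem linear_is_centered_of_independenceNumber_le_two_general {V : Type*}
    (G : SimpleGraph V)
    (hind : ∀ s : Finset V, (∀ a ∈ s, ∀ b ∈ s, a ≠ b → ¬ G.Adj a b) → s.card ≤ 2)
    {C : Type*} [DecidableEq C] (ψ : V → C) (h : IsLinearColoring G ψ) :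
    IsCenteredColoring G ψ := by
  classical
  intro S _ hconn
  have hfree : G.IndepSetFree 3 := by
    intro t ht
    have := hind t fun a ha b hb hab => ht.isIndepSet ha hb hab
    rw [ht.card_eq] at this; omega
  obtain ⟨u, v, p, hp⟩ := hconn.exists_isHamiltonian_of_indepSetFree_three (hfree.induce _)
  let q := p.map (Embedding.induce (S : Set V)).toHom
  have hq : q.IsPath := hp.isPath.map Subtype.val_injective
  have hsupp : q.support.toFinset = S := by
    ext x
    simp only [q, Walk.support_map, List.mem_toFinset, List.mem_map]
    exact ⟨fun ⟨y, _, hy⟩ => hy ▸ y.2, fun hx => ⟨⟨x, hx⟩, hp.mem_support _, rfl⟩⟩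
  obtain ⟨w, hw, hcard⟩ := h.exists_card_filter_eq_one hq
  exact ⟨w, hsupp ▸ List.mem_toFinset.mpr hw, hsupp ▸ hcard⟩

/-- If `G` has independence number at most `2`, then every linear
coloring of `G` is also a centered coloring. -/
theorem linear_is_centered_of_independenceNumber_le_two {V : Type*} [Fintype V]
    (G : SimpleGraph V)
    (hind : ∀ s : Finset V, (∀ a ∈ s, ∀ b ∈ s, a ≠ b → ¬ G.Adj a b) → s.card ≤ 2)
    {C : Type*} [DecidableEq C] (ψ : V → C) (h : IsLinearColoring G ψ) :
    IsCenteredColoring G ψ :=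
  linear_is_centered_of_independenceNumber_le_two_general G hind ψ h
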